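/- Let n be a positive integer with 17 ∣ 2n²+2n+1 and set m = (2n²+2n+1)/17. Assume that 8n+1 is not a perfect square. Then there is no element T̄ ∈ ℤ[C_17] whose coefficients all lie in {0,1,…,m} and sum to 2n+1, satisfying T̄ = T̄^{(−1)} and T̄² = 2m·C_17 − T̄^{(2)} + 2n in ℤ[C_17]. -/

import Mathlib

/-- For `T = ∑ a_g·g` in the group ring `ℤ[G]` and `t : ℤ`,
`pw T t` is `T^{(t)} = ∑ a_g·g^t`. -/
noncomputable def pw {G : Type} [CommGroup G] (T : MonoidAlgebra ℤ G) (t : ℤ) :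
    MonoidAlgebra ℤ G :=
  MonoidAlgebra.ofCoeff (Finsupp.mapDomain (fun g => g ^ t) T.coeff)

/-- The group-ring element `∑_{g ∈ G} g` of `ℤ[G]`. -/
noncomputable def gsum (G : Type) [CommGroup G] [Fintype G] : MonoidAlgebra ℤ G :=
  ∑ g : G, MonoidAlgebra.of ℤ G g

/-- The cyclic group of order 17, written multiplicatively. -/
abbrev C17 := Multiplicative (ZMod 17)

/-!
Apply the characters `χ_j : ℤ[C₁₇] → ℂ`, `g ↦ ζ^(j g)`. As `χ_j(C₁₇) = 0` for `j ≠ 0`, the values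
`x_j = χ_j(T̄)` satisfy `x_j² + x_{2j} = 2n` and `x_{-j} = x_j`; along the orbit
`1 → 2 → 4 → 8 → 16 = -1` of doubling this gives
`(x₁ - x₄)(x₂ - x₈)((x₁ + x₄)(x₂ + x₈) + 1) = 0`.
Since `Φ₁₇` has degree 16, the kernel of `χ₁` on `ℤ[C₁₇]` is `ℤ·C₁₇`: so `χ₁(S) = 0` forces
`17 ∣ ε(S)` (`ε` the augmentation), and `χ₁(S) = χ₁(S')`, `ε(S) = ε(S')` force `S = S'`.
As `(2n+1)² ≡ -1 (mod 17)`, none of `4n+1`, `4n+3`, `(4n+2)² + 1` is divisible by 17, and this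
rules out every alternative except `x₁ = x₂ = x₃`, i.e. `T̄ = T̄^{(2)} = T̄^{(3)}`. Since 3
generates `(ℤ/17)ˣ`, `T̄` is then constant off the identity, so `x₁ = a ∈ ℤ` with `a² + a = 2n`,
and `8n + 1 = (2a + 1)²`.
-/

open Polynomial

section GroupRing

variable {G : Type} [CommGroup G]

theorem pw_eq_mapDomainAlgHom (T : MonoidAlgebra ℤ G) (t : ℤ) :
    pw T t = MonoidAlgebra.mapDomainAlgHom ℤ ℤ (zpowGroupHom t) T := rfl

theorem coeff_pw_zpow {T : MonoidAlgebra ℤ G} {t : ℤ} (ht : Function.Injective (· ^ t : G → G))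
    (g : G) : (pw T t).coeff (g ^ t) = T.coeff g :=
  Finsupp.mapDomain_apply ht T.coeff g

theorem coeff_zpow_pow_of_pw_eq {T : MonoidAlgebra ℤ G} {t : ℤ}
    (ht : Function.Injective (· ^ t : G → G)) (hT : pw T t = T) (g : G) (k : ℕ) :
    T.coeff (g ^ t ^ k) = T.coeff g := by
  induction k with
  | zero => simp
  | succ k ih =>
    rw [pow_succ, zpow_mul, ← ih]
    conv_lhs => rw [← hT]
    exact coeff_pw_zpow ht _

theorem coeff_gsum [Fintype G] (g : G) : (gsum G).coeff g = 1 := by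
  simp [gsum, MonoidAlgebra.coeff_sum]

theorem eq_single_add_smul_gsum_of_pw_eq [Fintype G] {T : MonoidAlgebra ℤ G} {t : ℤ} {g₀ : G}
    (ht : Function.Injective (· ^ t : G → G)) (hT : pw T t = T)
    (hgen : ∀ g ≠ 1, ∃ k : ℕ, g₀ ^ t ^ k = g) :
    T = MonoidAlgebra.single 1 (T.coeff 1 - T.coeff g₀) + T.coeff g₀ • gsum G := by
  classical
  ext g
  rw [MonoidAlgebra.coeff_add, Finsupp.add_apply, MonoidAlgebra.coeff_smul_apply, coeff_gsum,
    MonoidAlgebra.coeff_single, Finsupp.single_apply, smul_eq_mul, mul_one]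
  by_cases hg : 1 = g
  · simp [← hg]
  · obtain ⟨k, rfl⟩ := hgen g (Ne.symm hg)
    simp [coeff_zpow_pow_of_pw_eq ht hT, hg]

noncomputable def aug : MonoidAlgebra ℤ G →ₐ[ℤ] ℤ := MonoidAlgebra.lift ℤ ℤ G 1

theorem aug_apply [Fintype G] (T : MonoidAlgebra ℤ G) : aug T = ∑ g, T.coeff g := by
  rw [aug, MonoidAlgebra.lift_apply, Finsupp.sum_fintype _ _ (by simp)]
  simp

theorem aug_pw (T : MonoidAlgebra ℤ G) (t : ℤ) : aug (pw T t) = aug T := by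
  rw [pw_eq_mapDomainAlgHom, ← AlgHom.comp_apply]
  congr 1
  exact MonoidAlgebra.algHom_ext (fun g => by simp [aug]) (by ext)

theorem aug_gsum [Fintype G] : aug (gsum G) = Fintype.card G := by
  simp [gsum, aug]

theorem aug_smul_gsum [Fintype G] (c : ℤ) :
    aug (c • gsum G) = c * Fintype.card G := by
  rw [map_smul, aug_gsum, smul_eq_mul]

end GroupRing

section Character

variable {p : ℕ} [NeZero p] {K : Type*} [Field K] {ζ : K}

noncomputable def chi (hζ : IsPrimitiveRoot ζ p) (j : ZMod p) :
    MonoidAlgebra ℤ (Multiplicative (ZMod p)) →ₐ[ℤ] K :=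
  MonoidAlgebra.lift ℤ K _ ((AddChar.zmodChar p hζ.pow_eq_one).mulShift j).toMonoidHom

theorem chi_apply (hζ : IsPrimitiveRoot ζ p) (j : ZMod p)
    (S : MonoidAlgebra ℤ (Multiplicative (ZMod p))) :
    chi hζ j S = ∑ g, (S.coeff g : K) * ζ ^ (j * g.toAdd).val := by
  rw [chi, MonoidAlgebra.lift_apply, Finsupp.sum_fintype _ _ (by simp)]
  simp [AddChar.zmodChar_apply]

theorem chi_pw (hζ : IsPrimitiveRoot ζ p) (j : ZMod p)
    (T : MonoidAlgebra ℤ (Multiplicative (ZMod p))) (t : ℤ) :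
    chi hζ j (pw T t) = chi hζ (j * t) T := by
  rw [pw_eq_mapDomainAlgHom, ← AlgHom.comp_apply]
  congr 1
  refine MonoidAlgebra.algHom_ext (fun g => ?_) (by ext)
  simp [chi, mul_assoc]

theorem chi_gsum (hζ : IsPrimitiveRoot ζ p) {j : ZMod p} (hj : j ≠ 0) :
    chi hζ j (gsum (Multiplicative (ZMod p))) = 0 := by
  rw [gsum, map_sum]
  simp only [chi, MonoidAlgebra.lift_of, AddChar.toMonoidHom_apply]
  rw [← AddChar.sum_eq_zero_of_ne_one (AddChar.zmodChar_primitive_of_primitive_root p hζ hj)]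
  exact Fintype.sum_equiv Multiplicative.toAdd _ _ fun _ => rfl

theorem chi_sq_add_chi_mul_two (hζ : IsPrimitiveRoot ζ p)
    {T : MonoidAlgebra ℤ (Multiplicative (ZMod p))} {a b : ℕ}
    (hT : T * T = (a : MonoidAlgebra ℤ _) * gsum _ - pw T 2 + (b : MonoidAlgebra ℤ _))
    {j : ZMod p} (hj : j ≠ 0) :
    chi hζ j T ^ 2 + chi hζ (j * 2) T = b := by
  have h := congrArg (chi hζ j) hT
  rw [map_add, map_sub, map_mul, map_mul, map_natCast, map_natCast, chi_gsum hζ hj, chi_pw] at h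
  push_cast at h
  linear_combination h

end Character

section PrimeOrder

variable {p : ℕ} [Fact p.Prime] {K : Type*} [Field K] [CharZero K] {ζ : K}

theorem zpow_injective_of_cast_ne_zero {t : ℤ} (ht : (t : ZMod p) ≠ 0) :
    Function.Injective (· ^ t : Multiplicative (ZMod p) → Multiplicative (ZMod p)) := by
  intro a b h
  have := congrArg Multiplicative.toAdd h
  simp only [toAdd_zpow, zsmul_eq_mul] at this
  exact Multiplicative.toAdd.injective (mul_left_cancel₀ ht this)

theorem eq_smul_gsum_of_chi_eq_zero (hζ : IsPrimitiveRoot ζ p)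
    {S : MonoidAlgebra ℤ (Multiplicative (ZMod p))} (hS : chi hζ 1 S = 0) :
    S = S.coeff 1 • gsum _ := by
  have hp := (Fact.out : p.Prime).pos
  set P : ℤ[X] := ∑ u : ZMod p, monomial u.val (S.coeff (.ofAdd u))
  have hPζ : aeval ζ P = 0 := by
    rw [← hS, chi_apply]
    simp only [P, map_sum, aeval_monomial, one_mul, eq_intCast]
    exact Fintype.sum_equiv Multiplicative.ofAdd _ _ fun _ => rfl
  have hdvd : cyclotomic p ℤ ∣ P := by
    rw [cyclotomic_eq_minpoly hζ hp]
    exact minpoly.isIntegrallyClosed_dvd (hζ.isIntegral hp) hPζ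
  have hdeg : P.natDegree ≤ (cyclotomic p ℤ).natDegree := by
    rw [natDegree_cyclotomic, Nat.totient_prime Fact.out]
    refine natDegree_sum_le_of_forall_le _ _ fun u _ => (natDegree_monomial_le _).trans ?_
    have := u.val_lt
    omega
  obtain ⟨c, hc⟩ : ∃ c, P = C c * cyclotomic p ℤ :=
    ⟨_, eq_leadingCoeff_mul_of_monic_of_dvd_of_natDegree_le (cyclotomic.monic p ℤ) hdvd hdeg⟩
  have hcoeff (u : ZMod p) : S.coeff (.ofAdd u) = c := by
    simpa [P, coeff_monomial, cyclotomic_prime, (ZMod.val_injective p).eq_iff, u.val_lt] using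
      congrArg (coeff · u.val) hc
  ext g
  rw [MonoidAlgebra.coeff_smul_apply, coeff_gsum, smul_eq_mul, mul_one]
  exact (hcoeff g.toAdd).trans (hcoeff 0).symm

theorem cast_aug_eq_zero_of_chi_eq_zero (hζ : IsPrimitiveRoot ζ p)
    {S : MonoidAlgebra ℤ (Multiplicative (ZMod p))} (hS : chi hζ 1 S = 0) :
    ((aug S : ℤ) : ZMod p) = 0 := by
  rw [eq_smul_gsum_of_chi_eq_zero hζ hS, aug_smul_gsum]
  simp

theorem chi_ne_zero_of_cast_aug_ne_zero (hζ : IsPrimitiveRoot ζ p)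
    {S : MonoidAlgebra ℤ (Multiplicative (ZMod p))}
    (hS : ((aug S : ℤ) : ZMod p) ≠ 0) : chi hζ 1 S ≠ 0 :=
  mt (cast_aug_eq_zero_of_chi_eq_zero hζ) hS

theorem eq_of_chi_eq_of_aug_eq (hζ : IsPrimitiveRoot ζ p)
    {S S' : MonoidAlgebra ℤ (Multiplicative (ZMod p))} (hchi : chi hζ 1 S = chi hζ 1 S')
    (haug : aug S = aug S') : S = S' := by
  have h := eq_smul_gsum_of_chi_eq_zero hζ (S := S - S') (by rw [map_sub, hchi, sub_self])
  have hc : (S - S').coeff 1 = 0 := by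
    have := congrArg aug h
    rw [aug_smul_gsum, map_sub, haug, sub_self] at this
    simpa [(Fact.out : p.Prime).ne_zero] using this.symm
  rwa [hc, zero_smul, sub_eq_zero] at h

end PrimeOrder

theorem sq_eq_neg_one_of_dvd {q n : ℕ} (h : q ∣ 2 * n ^ 2 + 2 * n + 1) :
    ((2 * n + 1 : ℕ) : ZMod q) ^ 2 = -1 := by
  have := (ZMod.natCast_eq_zero_iff _ q).2 h
  push_cast at this ⊢
  linear_combination 2 * this

section Seventeen

theorem fact_prime_seventeen : Fact (Nat.Prime 17) := ⟨by norm_num⟩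

-- Local: as a global instance it would change the instance terms in `no_Tbar_C17`'s statement.
attribute [local instance] fact_prime_seventeen

variable {K : Type*} [Field K] {ζ : K} {T : MonoidAlgebra ℤ C17} {c : K}

theorem chi_sq_add_self_of_pw_two_eq_self (hζ : IsPrimitiveRoot ζ 17)
    (hT : ∀ j : ZMod 17, j ≠ 0 → chi hζ j T ^ 2 + chi hζ (j * 2) T = c) (h2 : pw T 2 = T) :
    chi hζ 1 T ^ 2 + chi hζ 1 T = c := by
  have h12 : chi hζ (1 * 2) T = chi hζ 1 T := by
    conv_rhs => rw [← h2, chi_pw]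
    rfl
  have e1 := hT 1 one_ne_zero
  rwa [h12] at e1

theorem exists_chi_eq_intCast_of_pw_three_eq_self (hζ : IsPrimitiveRoot ζ 17) (h3 : pw T 3 = T) :
    ∃ a : ℤ, chi hζ 1 T = a := by
  have hgen : ∀ g : C17, g ≠ 1 → ∃ k : ℕ, Multiplicative.ofAdd (1 : ZMod 17) ^ (3 : ℤ) ^ k = g := by
    intro g hg
    obtain ⟨k, hk⟩ : ∃ k : Fin 16, (3 : ZMod 17) ^ (k : ℕ) = g.toAdd :=
      (by decide : ∀ u : ZMod 17, u ≠ 0 → ∃ k : Fin 16, (3 : ZMod 17) ^ (k : ℕ) = u) _ hg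
    refine ⟨k, Multiplicative.toAdd.injective ?_⟩
    simpa [toAdd_zpow] using hk
  rw [eq_single_add_smul_gsum_of_pw_eq (zpow_injective_of_cast_ne_zero (by decide)) h3 hgen]
  refine ⟨T.coeff 1 - T.coeff (.ofAdd 1), ?_⟩
  rw [map_add, map_smul, chi_gsum hζ one_ne_zero, smul_zero, add_zero]
  simp [chi]

variable [CharZero K]

theorem chi_one_eq_chi_four (hζ : IsPrimitiveRoot ζ 17) (hw : ((aug T : ℤ) : ZMod 17) ^ 2 = -1)
    (hsym : pw T (-1) = T) (hT : ∀ j : ZMod 17, j ≠ 0 → chi hζ j T ^ 2 + chi hζ (j * 2) T = c) :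
    chi hζ 1 T = chi hζ 4 T := by
  have e1 := hT 1 one_ne_zero
  have e2 := hT 2 (by decide)
  have e4 := hT 4 (by decide)
  have e8 := hT 8 (by decide)
  have h16 : chi hζ 16 T = chi hζ 1 T := by
    conv_rhs => rw [← hsym, chi_pw]
    congr 1
  rw [one_mul] at e1
  norm_num at e2 e4
  rw [show (8 * 2 : ZMod 17) = 16 by decide, h16] at e8
  have hfac : (chi hζ 1 T - chi hζ 4 T) * ((chi hζ 2 T - chi hζ 8 T) *
      ((chi hζ 1 T + chi hζ 4 T) * (chi hζ 2 T + chi hζ 8 T) + 1)) = 0 := by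
    linear_combination (chi hζ 2 T - chi hζ 8 T) * (chi hζ 2 T + chi hζ 8 T) * (e1 - e4)
      + (chi hζ 8 T - chi hζ 2 T) * (e2 - e8)
  have hprod : (chi hζ 1 T + chi hζ 4 T) * (chi hζ 2 T + chi hζ 8 T) + 1 ≠ 0 := by
    convert chi_ne_zero_of_cast_aug_ne_zero hζ
      (S := (T + pw T 4) * (pw T 2 + pw T 8) + 1) ?_ using 1
    · simp [chi_pw]
    · simp only [map_add, map_mul, map_one, aug_pw]
      push_cast
      intro h
      exact absurd (by linear_combination 4 * hw - h : (3 : ZMod 17) = 0) (by decide)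
  rcases mul_eq_zero.mp hfac with h14 | h
  · exact sub_eq_zero.mp h14
  rcases mul_eq_zero.mp h with h28 | h
  · have hpw : pw T 2 = pw T 8 :=
      eq_of_chi_eq_of_aug_eq hζ (by simp [chi_pw, sub_eq_zero.mp h28]) (by rw [aug_pw, aug_pw])
    have := congrArg (chi hζ 9) hpw
    rwa [chi_pw, chi_pw, show (9 : ZMod 17) * (2 : ℤ) = 1 by decide,
      show (9 : ZMod 17) * (8 : ℤ) = 4 by decide] at this
  · exact absurd h hprod

theorem pw_two_eq_self (hζ : IsPrimitiveRoot ζ 17) (hw : ((aug T : ℤ) : ZMod 17) ^ 2 = -1)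
    (hT : ∀ j : ZMod 17, j ≠ 0 → chi hζ j T ^ 2 + chi hζ (j * 2) T = c)
    (h14 : chi hζ 1 T = chi hζ 4 T) : pw T 2 = T := by
  have e1 := hT 1 one_ne_zero
  have e2 := hT 2 (by decide)
  rw [one_mul] at e1
  norm_num at e2
  have hfac : (chi hζ 1 T - chi hζ 2 T) * (chi hζ 1 T + chi hζ 2 T - 1) = 0 := by
    linear_combination e1 - e2 - h14
  have hne : chi hζ 1 T + chi hζ 2 T - 1 ≠ 0 := by
    convert chi_ne_zero_of_cast_aug_ne_zero hζ (S := T + pw T 2 - 1) ?_ using 1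
    · simp [chi_pw]
    · simp only [map_add, map_sub, map_one, aug_pw]
      push_cast
      intro h
      exact absurd (by linear_combination 4 * hw - (2 * (aug T : ZMod 17) + 1) * h :
        (5 : ZMod 17) = 0) (by decide)
  have h12 := sub_eq_zero.mp ((mul_eq_zero.mp hfac).resolve_right hne)
  exact eq_of_chi_eq_of_aug_eq hζ (by simp [chi_pw, h12]) (aug_pw T 2)

theorem pw_three_eq_self (hζ : IsPrimitiveRoot ζ 17) (hw : ((aug T : ℤ) : ZMod 17) ^ 2 = -1)
    (hT : ∀ j : ZMod 17, j ≠ 0 → chi hζ j T ^ 2 + chi hζ (j * 2) T = c) (h2 : pw T 2 = T) :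
    pw T 3 = T := by
  have e1 := chi_sq_add_self_of_pw_two_eq_self hζ hT h2
  have e3 := hT 3 (by decide)
  have h36 : chi hζ (3 * 2) T = chi hζ 3 T := by
    conv_rhs => rw [← h2, chi_pw]
    rfl
  rw [h36] at e3
  have hfac : (chi hζ 1 T - chi hζ 3 T) * (chi hζ 1 T + chi hζ 3 T + 1) = 0 := by
    linear_combination e1 - e3
  have hne : chi hζ 1 T + chi hζ 3 T + 1 ≠ 0 := by
    convert chi_ne_zero_of_cast_aug_ne_zero hζ (S := T + pw T 3 + 1) ?_ using 1
    · simp [chi_pw]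
    · simp only [map_add, map_one, aug_pw]
      push_cast
      intro h
      exact absurd (by linear_combination 4 * hw - (2 * (aug T : ZMod 17) - 1) * h :
        (5 : ZMod 17) = 0) (by decide)
  have h13 := sub_eq_zero.mp ((mul_eq_zero.mp hfac).resolve_right hne)
  exact eq_of_chi_eq_of_aug_eq hζ (by simp [chi_pw, h13]) (aug_pw T 3)

theorem exists_sq_eq_eight_mul_add_one (hζ : IsPrimitiveRoot ζ 17) {n : ℕ}
    (h17 : 17 ∣ 2 * n ^ 2 + 2 * n + 1) (hsum : aug T = 2 * n + 1) (hsym : pw T (-1) = T)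
    (hT : ∀ j : ZMod 17, j ≠ 0 → chi hζ j T ^ 2 + chi hζ (j * 2) T = 2 * n) :
    ∃ c : ℕ, c ^ 2 = 8 * n + 1 := by
  have hw : ((aug T : ℤ) : ZMod 17) ^ 2 = -1 := by
    rw [hsum]
    exact_mod_cast sq_eq_neg_one_of_dvd h17
  have h2 := pw_two_eq_self hζ hw hT (chi_one_eq_chi_four hζ hw hsym hT)
  obtain ⟨a, ha⟩ := exists_chi_eq_intCast_of_pw_three_eq_self hζ (pw_three_eq_self hζ hw hT h2)
  have hquad := chi_sq_add_self_of_pw_two_eq_self hζ hT h2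
  rw [ha] at hquad
  have hquadℤ : a ^ 2 + a = 2 * n := by exact_mod_cast hquad
  refine ⟨(2 * a + 1).natAbs, ?_⟩
  have : ((2 * a + 1).natAbs : ℤ) ^ 2 = 8 * n + 1 := by
    rw [Int.natAbs_sq]
    linear_combination 4 * hquadℤ
  exact_mod_cast this

end Seventeen

theorem no_Tbar_C17_general (n m : ℕ) (h17 : 17 ∣ 2 * n ^ 2 + 2 * n + 1)
    (hsq : ¬ ∃ c : ℕ, c ^ 2 = 8 * n + 1) :
    ¬ ∃ T : MonoidAlgebra ℤ C17,
        (∀ g : C17, 0 ≤ T.coeff g ∧ T.coeff g ≤ (m : ℤ)) ∧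
        (∑ g : C17, T.coeff g) = ((2 * n + 1 : ℕ) : ℤ) ∧
        T = pw T (-1) ∧
        T * T = ((2 * m : ℕ) : MonoidAlgebra ℤ C17) * gsum C17 - pw T 2
          + ((2 * n : ℕ) : MonoidAlgebra ℤ C17) := by
  rintro ⟨T, -, hsum, hsym, hT⟩
  have hζ := Complex.isPrimitiveRoot_exp 17 (by norm_num)
  refine hsq (exists_sq_eq_eight_mul_add_one hζ h17 ?_ hsym.symm fun j hj => ?_)
  · rw [aug_apply]
    exact_mod_cast hsum
  · exact_mod_cast chi_sq_add_chi_mul_two hζ hT hj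

/-- Suppose `17 ∣ 2n²+2n+1`, `m = (2n²+2n+1)/17`, and `8n+1` is not a perfect square.
Then there is no `T̄ ∈ ℤ[C₁₇]` with coefficients in `{0,…,m}` summing to `2n+1` such
that `T̄ = T̄^{(−1)}` and `T̄² = 2m·C₁₇ − T̄^{(2)} + 2n`. -/
theorem no_Tbar_C17 (n m : ℕ) (hn : 0 < n) (h17 : 17 ∣ 2 * n ^ 2 + 2 * n + 1)
    (hm : 17 * m = 2 * n ^ 2 + 2 * n + 1)
    (hsq : ¬ ∃ c : ℕ, c ^ 2 = 8 * n + 1) :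
    ¬ ∃ T : MonoidAlgebra ℤ C17,
        (∀ g : C17, 0 ≤ T.coeff g ∧ T.coeff g ≤ (m : ℤ)) ∧
        (∑ g : C17, T.coeff g) = ((2 * n + 1 : ℕ) : ℤ) ∧
        T = pw T (-1) ∧
        T * T = ((2 * m : ℕ) : MonoidAlgebra ℤ C17) * gsum C17 - pw T 2
          + ((2 * n : ℕ) : MonoidAlgebra ℤ C17) :=
  no_Tbar_C17_general n m h17 hsq
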